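/- arXiv:2002.04960 — 4 statements merged into one kernel-verified Lean document; each statement's English description precedes it below -/
import Mathlib

section
/- For a > 0 and b > 0, the function x ↦ (1/√(ab))·arctan(√b·x/(√a·√(x²+a+b))) is an antiderivative of x ↦ 1/((x²+a)·√(x²+a+b)) on ℝ. -/
/-!
With `k = √b / √a` and `s = √(x² + a + b)`, the argument of `arctan` is `k · (x / s)`, and
`(x / s)' = (a + b) / s³`. Since `s² + k² x² = (a + b)(x² + a) / a`, the chain rule gives
`(arctan (k x / s))' = √a √b / ((x² + a) s)`, and the prefactor `1 / √(ab)` cancels `√a √b`.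
-/

open Real

lemma hasDerivAt_div_sqrt_sq_add {c : ℝ} (hc : 0 < c) (x : ℝ) :
    HasDerivAt (fun x => x / √(x ^ 2 + c)) (c / √(x ^ 2 + c) ^ 3) x := by
  have hpos : 0 < x ^ 2 + c := by positivity
  have hsqrt : HasDerivAt (fun x => √(x ^ 2 + c)) (x / √(x ^ 2 + c)) x :=
    (((hasDerivAt_pow 2 x).add_const c).sqrt hpos.ne').congr_deriv (by ring)
  refine ((hasDerivAt_id' x).div hsqrt (sqrt_pos.2 hpos).ne').congr_deriv ?_
  field_simp
  linear_combination sq_sqrt hpos.le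

lemma hasDerivAt_arctan_mul_div_sqrt_sq_add (k : ℝ) {c : ℝ} (hc : 0 < c) (x : ℝ) :
    HasDerivAt (fun x => arctan (k * (x / √(x ^ 2 + c))))
      (k * c / ((x ^ 2 + c + k ^ 2 * x ^ 2) * √(x ^ 2 + c))) x := by
  have hpos : 0 < x ^ 2 + c := by positivity
  refine ((hasDerivAt_div_sqrt_sq_add hc x).const_mul k).arctan.congr_deriv ?_
  have hs := sqrt_pos.2 hpos
  field_simp
  rw [sq_sqrt hpos.le]

theorem antideriv_arctan_form (a b : ℝ) (ha : 0 < a) (hb : 0 < b) (x : ℝ) :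
    HasDerivAt (fun x : ℝ =>
        (1 / Real.sqrt (a * b)) *
          Real.arctan (Real.sqrt b * x / (Real.sqrt a * Real.sqrt (x ^ 2 + a + b))))
      (1 / ((x ^ 2 + a) * Real.sqrt (x ^ 2 + a + b))) x := by
  have hsa := sqrt_pos.2 ha
  have hsb := sqrt_pos.2 hb
  have harg (y : ℝ) :
      √b * y / (√a * √(y ^ 2 + a + b)) = √b / √a * (y / √(y ^ 2 + (a + b))) := by
    rw [mul_div_mul_comm, add_assoc]
  simp only [harg]
  refine ((hasDerivAt_arctan_mul_div_sqrt_sq_add (√b / √a) (add_pos ha hb) x).const_mul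
    (1 / √(a * b))).congr_deriv ?_
  rw [sqrt_mul ha.le, div_pow, sq_sqrt hb.le, ← add_assoc]
  field_simp
  rw [sq_sqrt ha.le]
  ring
end

section
/- For fixed y ∈ ℝ, d > 0, and real limits u < v, ∫_u^v (2·y·d)/(3(χ²+d²)·√(χ²+y²+d²)) dχ = (2/3)·arctan(v·y/(d·√(v²+y²+d²))) − (2/3)·arctan(u·y/(d·√(u²+y²+d²))). -/
/-! The integrand is the derivative of `(2/3) arctan (χ y / (d s))` with `s = √(χ² + y² + d²)`:
the factor `1 + (χ y / (d s))²` equals `(χ² + d²)(y² + d²) / (d² s²)`, and its `y² + d²` cancels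
against the numerator of the derivative of the quotient. The fundamental theorem of calculus
finishes. -/

open Real

lemma hasDerivAt_sqrt_sq_add {c x : ℝ} (hx : x ^ 2 + c ≠ 0) :
    HasDerivAt (fun χ : ℝ => √(χ ^ 2 + c)) (x / √(x ^ 2 + c)) x := by
  have h := ((hasDerivAt_pow 2 x).add_const c).sqrt hx
  convert h using 1
  push_cast
  ring

lemma one_add_sq_div_mul_sqrt (x y : ℝ) {d : ℝ} (hd : d ≠ 0) :
    1 + (x * y / (d * √(x ^ 2 + y ^ 2 + d ^ 2))) ^ 2 =
      (x ^ 2 + d ^ 2) * (y ^ 2 + d ^ 2) / (d ^ 2 * (x ^ 2 + y ^ 2 + d ^ 2)) := by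
  have hq : 0 < x ^ 2 + y ^ 2 + d ^ 2 := by positivity
  rw [div_pow, mul_pow, mul_pow, sq_sqrt hq.le]
  field_simp
  ring

lemma hasDerivAt_arctan_mul_div_mul_sqrt (y : ℝ) {d : ℝ} (hd : d ≠ 0) (x : ℝ) :
    HasDerivAt (fun χ => arctan (χ * y / (d * √(χ ^ 2 + y ^ 2 + d ^ 2))))
      (y * d / ((x ^ 2 + d ^ 2) * √(x ^ 2 + y ^ 2 + d ^ 2))) x := by
  have hq : 0 < x ^ 2 + y ^ 2 + d ^ 2 := by positivity
  have hs : 0 < √(x ^ 2 + y ^ 2 + d ^ 2) := sqrt_pos.mpr hq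
  have hsqrt : HasDerivAt (fun χ : ℝ => √(χ ^ 2 + y ^ 2 + d ^ 2))
      (x / √(x ^ 2 + y ^ 2 + d ^ 2)) x := by
    simpa only [add_assoc] using hasDerivAt_sqrt_sq_add (c := y ^ 2 + d ^ 2) (by linarith)
  have hquot : HasDerivAt (fun χ => χ * y / (d * √(χ ^ 2 + y ^ 2 + d ^ 2)))
      ((1 * y * (d * √(x ^ 2 + y ^ 2 + d ^ 2)) - x * y * (d * (x / √(x ^ 2 + y ^ 2 + d ^ 2)))) /
        (d * √(x ^ 2 + y ^ 2 + d ^ 2)) ^ 2) x :=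
    ((hasDerivAt_id x).mul_const y).div (hsqrt.const_mul d) (by positivity)
  refine hquot.arctan.congr_deriv ?_
  rw [one_add_sq_div_mul_sqrt x y hd]
  have hx : 0 < x ^ 2 + d ^ 2 := by positivity
  field_simp
  rw [sq_sqrt hq.le]
  ring

theorem second_inner_integral_general (y d u v : ℝ) (hd : 0 < d) :
    ∫ χ in u..v, 2 * y * d / (3 * (χ ^ 2 + d ^ 2) * Real.sqrt (χ ^ 2 + y ^ 2 + d ^ 2)) =
      (2 / 3) * Real.arctan (v * y / (d * Real.sqrt (v ^ 2 + y ^ 2 + d ^ 2))) -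
      (2 / 3) * Real.arctan (u * y / (d * Real.sqrt (u ^ 2 + y ^ 2 + d ^ 2))) := by
  have hF : ∀ x : ℝ, HasDerivAt
      (fun χ => (2 / 3) * arctan (χ * y / (d * √(χ ^ 2 + y ^ 2 + d ^ 2))))
      (2 * y * d / (3 * (x ^ 2 + d ^ 2) * √(x ^ 2 + y ^ 2 + d ^ 2))) x := fun x => by
    refine ((hasDerivAt_arctan_mul_div_mul_sqrt y hd.ne' x).const_mul (2 / 3 : ℝ)).congr_deriv ?_
    rw [div_mul_div_comm]
    ring
  have hcont : Continuous fun χ : ℝ =>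
      2 * y * d / (3 * (χ ^ 2 + d ^ 2) * √(χ ^ 2 + y ^ 2 + d ^ 2)) :=
    continuous_const.div (by fun_prop) fun χ =>
      have : 0 < √(χ ^ 2 + y ^ 2 + d ^ 2) := sqrt_pos.mpr (by positivity)
      by positivity
  exact intervalIntegral.integral_eq_sub_of_hasDerivAt (fun x _ => hF x)
    (hcont.intervalIntegrable u v)

theorem second_inner_integral (y d u v : ℝ) (hd : 0 < d) (huv : u < v) :
    ∫ χ in u..v, 2 * y * d / (3 * (χ ^ 2 + d ^ 2) * Real.sqrt (χ ^ 2 + y ^ 2 + d ^ 2)) =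
      (2 / 3) * Real.arctan (v * y / (d * Real.sqrt (v ^ 2 + y ^ 2 + d ^ 2))) -
      (2 / 3) * Real.arctan (u * y / (d * Real.sqrt (u ^ 2 + y ^ 2 + d ^ 2))) :=
  second_inner_integral_general y d u v hd
end

section
/- Define α(B) = B/(3(B+1)√(2B+1)) + (2/(3π))·arctan(B/√(2B+1)) for B ≥ 0. Then α(B) ≤ 1/3 for all B ≥ 0. -/
/-!
Put `s = √(2B+1)` and `θ = arctan (B / s)`. Since `B² + s² = (B+1)²`, we get `cos θ = s / (B+1)`,
and `π/2 - θ ≥ sin (π/2 - θ) = cos θ`. Hence `(2/(3π)) θ ≤ 1/3 - (2/(3π)) s/(B+1)`, and the remaining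
term `B / (3 (B+1) s)` is at most `(2/(3π)) s/(B+1)` because `π B ≤ 4 B ≤ 2 s²`.
-/

noncomputable def channelGain (B : ℝ) : ℝ :=
  B / (3 * (B + 1) * Real.sqrt (2 * B + 1)) +
    (2 / (3 * Real.pi)) * Real.arctan (B / Real.sqrt (2 * B + 1))

open Real

theorem Real.cos_arctan_le_pi_div_two_sub_arctan (x : ℝ) : cos (arctan x) ≤ π / 2 - arctan x := by
  rw [← sin_pi_div_two_sub]
  exact sin_le (sub_nonneg.2 (arctan_lt_pi_div_two x).le)

theorem Real.cos_arctan_div {a b : ℝ} (hb : 0 < b) :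
    cos (arctan (a / b)) = b / √(a ^ 2 + b ^ 2) := by
  rw [cos_arctan, div_pow, one_add_div (by positivity), sqrt_div' _ (sq_nonneg b),
    sqrt_sq hb.le, add_comm (b ^ 2)]
  field_simp

theorem channelGain_le_one_third (B : ℝ) (hB : 0 ≤ B) :
    channelGain B ≤ 1 / 3 := by
  set s := √(2 * B + 1)
  have hs : 0 < s := sqrt_pos.2 (by linarith)
  have hs2 : s ^ 2 = 2 * B + 1 := sq_sqrt (by linarith)
  have hcos : cos (arctan (B / s)) = s / (B + 1) := by
    rw [cos_arctan_div hs, show B ^ 2 + s ^ 2 = (B + 1) ^ 2 by rw [hs2]; ring,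
      sqrt_sq (by linarith)]
  have hθ : arctan (B / s) ≤ π / 2 - s / (B + 1) := by
    linarith [hcos ▸ cos_arctan_le_pi_div_two_sub_arctan (B / s)]
  have hrational : B / (3 * (B + 1) * s) ≤ 2 / (3 * π) * (s / (B + 1)) := by
    rw [div_mul_div_comm, div_le_div_iff₀ (by positivity) (by positivity)]
    have hπB : π * B ≤ 2 * s ^ 2 := by nlinarith [pi_lt_four]
    nlinarith [mul_le_mul_of_nonneg_left hπB (show (0 : ℝ) ≤ 3 * (B + 1) by linarith)]
  calc channelGain B
      ≤ B / (3 * (B + 1) * s) + 2 / (3 * π) * (π / 2 - s / (B + 1)) := by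
        unfold channelGain; gcongr
    _ ≤ 1 / 3 := by
        have : 2 / (3 * π) * (π / 2) = 1 / 3 := by field_simp
        linarith
end

section
/- Define α(B) = B/(3(B+1)√(2B+1)) + (2/(3π))·arctan(B/√(2B+1)). Then α is monotonically increasing on [0, ∞). -/
/-! On `(-1/2, ∞)` the derivative of `channelGain` is
`((4 - π) x² + (π + 6) x + (π + 2)) / (3π (x + 1)² (2x + 1)^{3/2})`, and with `t = x + 1/2` the
numerator is `(4 - π) t² + (2π + 2) t + π/4 > 0`, since `π ≤ 4`. -/

open Real

section Derivatives

variable {x : ℝ}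

lemma hasDerivAt_sqrt_two_mul_add_one (hx : -1 / 2 < x) :
    HasDerivAt (fun y => √(2 * y + 1)) (1 / √(2 * x + 1)) x := by
  have hlin : HasDerivAt (fun y : ℝ => 2 * y + 1) 2 x :=
    (((hasDerivAt_id' x).const_mul 2).add_const 1).congr_deriv (mul_one 2)
  refine ((hasDerivAt_sqrt (by linarith)).comp x hlin).congr_deriv ?_
  field_simp

lemma hasDerivAt_div_sqrt_two_mul_add_one (hx : -1 / 2 < x) :
    HasDerivAt (fun y => y / √(2 * y + 1)) ((x + 1) / √(2 * x + 1) ^ 3) x := by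
  have hs : √(2 * x + 1) ^ 2 = 2 * x + 1 := sq_sqrt (by linarith)
  have hs0 : 0 < √(2 * x + 1) := sqrt_pos.mpr (by linarith)
  refine ((hasDerivAt_id x).div (hasDerivAt_sqrt_two_mul_add_one hx) hs0.ne').congr_deriv ?_
  simp only [id]
  generalize √(2 * x + 1) = s at hs hs0 ⊢
  field_simp
  linear_combination hs

lemma hasDerivAt_arctan_div_sqrt_two_mul_add_one (hx : -1 / 2 < x) :
    HasDerivAt (fun y => arctan (y / √(2 * y + 1))) (1 / ((x + 1) * √(2 * x + 1))) x := by
  have hs : √(2 * x + 1) ^ 2 = 2 * x + 1 := sq_sqrt (by linarith)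
  have hs0 : 0 < √(2 * x + 1) := sqrt_pos.mpr (by linarith)
  have hx1 : 0 < x + 1 := by linarith
  refine ((hasDerivAt_arctan _).comp x (hasDerivAt_div_sqrt_two_mul_add_one hx)).congr_deriv ?_
  generalize √(2 * x + 1) = s at hs hs0 ⊢
  have h_one_add_sq : 1 + (x / s) ^ 2 = (x + 1) ^ 2 / s ^ 2 := by
    field_simp
    linear_combination hs
  rw [h_one_add_sq]
  field_simp

lemma hasDerivAt_div_mul_sqrt_two_mul_add_one (hx : -1 / 2 < x) :
    HasDerivAt (fun y => y / (3 * (y + 1) * √(2 * y + 1)))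
      ((1 + x - x ^ 2) / (3 * (x + 1) ^ 2 * √(2 * x + 1) ^ 3)) x := by
  have hs : √(2 * x + 1) ^ 2 = 2 * x + 1 := sq_sqrt (by linarith)
  have hs0 : 0 < √(2 * x + 1) := sqrt_pos.mpr (by linarith)
  have hx1 : 0 < x + 1 := by linarith
  have hden : HasDerivAt (fun y => 3 * (y + 1) * √(2 * y + 1))
      (3 * √(2 * x + 1) + 3 * (x + 1) * (1 / √(2 * x + 1))) x :=
    ((((hasDerivAt_id' x).add_const 1).const_mul 3).congr_deriv (mul_one 3)).mul
      (hasDerivAt_sqrt_two_mul_add_one hx)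
  refine ((hasDerivAt_id x).div hden (by positivity)).congr_deriv ?_
  simp only [id]
  generalize √(2 * x + 1) = s at hs hs0 ⊢
  field_simp
  linear_combination hs

end Derivatives

lemma channelGain_hasDerivAt {x : ℝ} (hx : -1 / 2 < x) :
    HasDerivAt channelGain
      (((4 - π) * x ^ 2 + (π + 6) * x + (π + 2)) /
        (3 * π * (x + 1) ^ 2 * √(2 * x + 1) ^ 3)) x := by
  have hs : √(2 * x + 1) ^ 2 = 2 * x + 1 := sq_sqrt (by linarith)
  have hs0 : 0 < √(2 * x + 1) := sqrt_pos.mpr (by linarith)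
  have hx1 : 0 < x + 1 := by linarith
  refine ((hasDerivAt_div_mul_sqrt_two_mul_add_one hx).add
    ((hasDerivAt_arctan_div_sqrt_two_mul_add_one hx).const_mul (2 / (3 * π)))).congr_deriv ?_
  generalize √(2 * x + 1) = s at hs hs0 ⊢
  field_simp
  linear_combination (2 * x + 2) * hs

lemma channelGain_strictMonoOn : StrictMonoOn channelGain (Set.Ioi (-1 / 2)) := by
  refine strictMonoOn_of_deriv_pos (convex_Ioi _)
    (fun x hx => (channelGain_hasDerivAt hx).continuousAt.continuousWithinAt) fun x hx => ?_
  rw [interior_Ioi, Set.mem_Ioi] at hx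
  rw [(channelGain_hasDerivAt hx).deriv]
  have hπ := pi_pos
  have hnum : 0 < (4 - π) * x ^ 2 + (π + 6) * x + (π + 2) := by
    nlinarith [mul_nonneg (sub_nonneg.mpr pi_le_four) (sq_nonneg (x + 1 / 2))]
  have hs0 : 0 < √(2 * x + 1) := sqrt_pos.mpr (by linarith)
  have hx1 : 0 < x + 1 := by linarith
  positivity

theorem channelGain_monotone : MonotoneOn channelGain (Set.Ici (0 : ℝ)) :=
  channelGain_strictMonoOn.monotoneOn.mono (Set.Ici_subset_Ioi.mpr (by norm_num))
end
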